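/- For the GFSGA*_{(2)} mode with sampling steps cycling through the consecutive differences (σ_1, ..., σ_{n-1}) = (d_1, ..., d_{n-1}), at the j-th sampling instance (1 ≤ j ≤ n-1) the number of repeated bits satisfies q_j ≥ j; consequently the total number of repeated equations over the first n-1 sampled outputs after the initial one is at least 1 + 2 + ... + (n-1) = n(n-1)/2. -/

import Mathlib

open Finset

/- The shifts make `t j - l j` independent of `j`, so the tap `l i` shifted at time `j` coincides
with the tap `l j` shifted at time `i`. For `i < j` this point lies in both the `i`-th and the `j`-th shifted
set, and these `j` points are distinct, giving `q j ≥ j`; summing, `∑ q j ≥ 1 + ⋯ + (n - 1)`. -/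

theorem add_comm_shift_of_succ_eq_add_sub {G : Type*} [AddCommGroup G] {l t : ℕ → G}
    (ht : ∀ j, t (j + 1) = t j + (l (j + 1) - l j)) (i j : ℕ) : l i + t j = l j + t i := by
  have hconst : ∀ k, t k - l k = t 0 - l 0 := by
    intro k
    induction k with
    | zero => rfl
    | succ k ih => rw [ht, ← ih]; abel
  have h := (hconst i).trans (hconst j).symm
  rw [sub_eq_sub_iff_add_eq_add] at h
  rw [add_comm (l i), add_comm (l j)]
  exact h.symm

theorem le_card_biUnion_inter_of_injOn {G : Type*} [AddCommGroup G] [DecidableEq G]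
    {n j : ℕ} {l t : ℕ → G} {S : ℕ → Finset G} (hl : Set.InjOn l (Set.Iio n))
    (ht : ∀ j, t (j + 1) = t j + (l (j + 1) - l j))
    (hS : ∀ k, S k = (range n).image fun i => l i + t k) (hj : j < n) :
    j ≤ #((range j).biUnion S ∩ S j) := by
  have hrepeated : (range j).image (fun i => l i + t j) ⊆ (range j).biUnion S ∩ S j := by
    intro x hx
    obtain ⟨i, hi, rfl⟩ := mem_image.1 hx
    have hin : i < n := (mem_range.1 hi).trans hj
    refine mem_inter.2 ⟨mem_biUnion.2 ⟨i, hi, ?_⟩, ?_⟩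
    · rw [hS, add_comm_shift_of_succ_eq_add_sub ht]
      exact mem_image_of_mem _ (mem_range.2 hj)
    · rw [hS]
      exact mem_image_of_mem _ (mem_range.2 hin)
  have hinj : Set.InjOn (fun i => l i + t j) (range j) := fun a ha b hb hab =>
    hl ((mem_range.1 ha).trans hj) ((mem_range.1 hb).trans hj) (add_right_cancel hab)
  calc j = #((range j).image fun i => l i + t j) := by rw [card_image_of_injOn hinj, card_range]
    _ ≤ _ := card_le_card hrepeated

theorem choose_two_le_sum_Icc {n : ℕ} {q : ℕ → ℕ} (hq : ∀ j ∈ Icc 1 (n - 1), j ≤ q j) :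
    n * (n - 1) / 2 ≤ ∑ j ∈ Icc 1 (n - 1), q j := by
  have hrange : ∑ j ∈ Icc 1 (n - 1), j = ∑ j ∈ range n, j :=
    sum_subset (fun j hj => by simp only [mem_Icc, mem_range] at hj ⊢; omega)
      (fun j hjn hj => by simp only [mem_Icc, mem_range] at hjn hj; omega)
  calc n * (n - 1) / 2 = ∑ j ∈ Icc 1 (n - 1), j := by rw [hrange, sum_range_id]
    _ ≤ _ := sum_le_sum hq

theorem stmt_8_general (n : ℕ) (l t : ℕ → ℤ)
    (hmono : ∀ i j, i < j → j < n → l i < l j)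
    (ht : ∀ j, t (j + 1) = t j + (l (j + 1) - l j))
    (S : ℕ → Finset ℤ)
    (hS : ∀ j, S j = (Finset.range n).image (fun i => l i + t j))
    (q : ℕ → ℕ)
    (hq : ∀ j, q j = (((Finset.range j).biUnion S) ∩ S j).card) :
    (∀ j, 1 ≤ j → j < n → j ≤ q j) ∧
    n * (n - 1) / 2 ≤ ∑ j ∈ Finset.Icc 1 (n - 1), q j := by
  have hl : StrictMonoOn l (Set.Iio n) := fun i _ j hj hij => hmono i j hij hj
  have hrepeated : ∀ j, j < n → j ≤ q j := fun j hj =>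
    hq j ▸ le_card_biUnion_inter_of_injOn hl.injOn ht hS hj
  refine ⟨fun j _ hj => hrepeated j hj, choose_two_le_sum_Icc fun j hj => hrepeated j ?_⟩
  simp only [mem_Icc] at hj
  omega

/-- GFSGA*₍₂₎ mode: sampling steps cycle through the consecutive differences
`d j = l (j+1) - l j`.  With `t 0 = 0` and `t (j+1) = t j + d j`, and shifted
tap states `S j = I₀ + t j`, the number of repeated bits at the `j`-th sampling
instance satisfies `q j ≥ j` for `1 ≤ j ≤ n - 1`, and hence the total number of
repeated equations over these samplings is at least `n(n-1)/2`. -/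
theorem stmt_8 (n : ℕ) (hn : 1 ≤ n) (l t : ℕ → ℤ)
    (hmono : ∀ i j, i < j → j < n → l i < l j)
    (ht0 : t 0 = 0) (ht : ∀ j, t (j + 1) = t j + (l (j + 1) - l j))
    (S : ℕ → Finset ℤ)
    (hS : ∀ j, S j = (Finset.range n).image (fun i => l i + t j))
    (q : ℕ → ℕ)
    (hq : ∀ j, q j = (((Finset.range j).biUnion S) ∩ S j).card) :
    (∀ j, 1 ≤ j → j < n → j ≤ q j) ∧
    n * (n - 1) / 2 ≤ ∑ j ∈ Finset.Icc 1 (n - 1), q j :=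
  stmt_8_general n l t hmono ht S hS q hq
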